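/- Let k = ℤ/2ℤ and let R be the mod-2 coinvariant algebra of S₃ as defined in the context. For the group-algebra elements c₁ = 1 + s₁₂ + s₂₁, c₂ = 1 + s₂ + s₂₁ + s₁₂₁, and c₃ = 1 + s₂ + s₁₂ + s₁₂₁ of k[S₃], the ranges of the induced k-linear endomorphisms of R are: range(T_{c₁}) = span_k{[1], [x₁²x₂]}, range(T_{c₂}) = span_k{[x₂], [x₁² + x₁x₂]}, and range(T_{c₃}) = span_k{[x₁], [x₁²]}. -/

import Mathlib

/-
Modulo `I` and in characteristic 2 the variables satisfy `x₃ = x₁ + x₂`, `x₂² = x₁² + x₁x₂` and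
`x₁³ = 0`, so multiplication by any variable preserves the `k`-span of the Artin monomials
`1, x₁, x₂, x₁², x₁x₂, x₁²x₂`, and these span `R`. Each `T_c` is a sum of variable permutations,
which preserve `I`; hence the range of `π ∘ T_c` is spanned by the classes of `T_c` applied to the
six Artin monomials, and these are computed one by one using the relations above.
-/

namespace Stmt2

noncomputable section

abbrev k := ZMod 2

/-- The polynomial ring `P = k[x₁, x₂, x₃]`. -/
abbrev P := MvPolynomial (Fin 3) k

def x₁ : P := MvPolynomial.X 0
def x₂ : P := MvPolynomial.X 1

/-- The ideal generated by the elementary symmetric polynomials `e₁, e₂, e₃`. -/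
def I : Ideal P := Ideal.span
  {MvPolynomial.esymm (Fin 3) k 1, MvPolynomial.esymm (Fin 3) k 2,
    MvPolynomial.esymm (Fin 3) k 3}

/-- The mod-2 coinvariant algebra of `S₃`. -/
abbrev R := P ⧸ I

/-- The quotient map `P → R` as a `k`-linear map. -/
def π : P →ₗ[k] R := (Ideal.Quotient.mkₐ k I).toLinearMap

/-- The action of a permutation `w` on `P` by permuting the variables,
as a `k`-linear map. -/
def L (w : Equiv.Perm (Fin 3)) : P →ₗ[k] P := (MvPolynomial.rename ⇑w).toLinearMap

def t₁ : Equiv.Perm (Fin 3) := Equiv.swap 0 1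
def t₂ : Equiv.Perm (Fin 3) := Equiv.swap 1 2

/-- The linear endomorphism `T_{c₁}` of `P` for `c₁ = 1 + s₁₂ + s₂₁`. -/
def T₁ : P →ₗ[k] P := L 1 + L (t₁ * t₂) + L (t₂ * t₁)

/-- The linear endomorphism `T_{c₂}` of `P` for `c₂ = 1 + s₂ + s₂₁ + s₁₂₁`. -/
def T₂ : P →ₗ[k] P := L 1 + L t₂ + L (t₂ * t₁) + L (t₁ * t₂ * t₁)

/-- The linear endomorphism `T_{c₃}` of `P` for `c₃ = 1 + s₂ + s₁₂ + s₁₂₁`. -/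
def T₃ : P →ₗ[k] P := L 1 + L t₂ + L (t₁ * t₂) + L (t₁ * t₂ * t₁)

open MvPolynomial

theorem _root_.Submodule.eq_top_of_one_mem_of_mul_mem {S A : Type*} [CommSemiring S]
    [Semiring A] [Algebra S A] (N : Submodule S A) {s : Set A} (hs : Algebra.adjoin S s = ⊤)
    (h1 : 1 ∈ N) (hmul : ∀ x ∈ s, ∀ n ∈ N, n * x ∈ N) : N = ⊤ := by
  have key : ∀ y ∈ Algebra.adjoin S s, ∀ n ∈ N, n * y ∈ N := by
    intro y hy
    induction hy using Algebra.adjoin_induction with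
    | mem x hx => exact hmul x hx
    | algebraMap r =>
      intro n hn
      rw [← Algebra.commutes, ← Algebra.smul_def]
      exact N.smul_mem r hn
    | add x y _ _ hx hy => exact fun n hn => mul_add n x y ▸ N.add_mem (hx n hn) (hy n hn)
    | mul x y _ _ hx hy => exact fun n hn => mul_assoc n x y ▸ hy _ (hx n hn)
  refine eq_top_iff.2 fun y _ => ?_
  simpa using key y (hs ▸ Algebra.mem_top) 1 h1

theorem _root_.LinearMap.range_comp_eq_span_image {S M N : Type*} [Semiring S] [AddCommGroup M]
    [AddCommGroup N] [Module S M] [Module S N] {f : M →ₗ[S] N} {T : M →ₗ[S] M}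
    (hT : LinearMap.ker f ≤ (LinearMap.ker f).comap T) {s : Set M}
    (hs : Submodule.span S (f '' s) = ⊤) :
    LinearMap.range (f ∘ₗ T) = Submodule.span S ((f ∘ₗ T) '' s) := by
  have hsup : Submodule.span S s ⊔ LinearMap.ker f = ⊤ := by
    rw [← Submodule.comap_map_eq, Submodule.map_span, hs, Submodule.comap_top]
  have hker : (LinearMap.ker f).map (f ∘ₗ T) = ⊥ := by
    rw [eq_bot_iff, Submodule.map_le_iff_le_comap]
    exact hT
  rw [LinearMap.range_eq_map, ← hsup, Submodule.map_sup, hker, sup_bot_eq, Submodule.map_span]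

theorem _root_.Multiset.esymm_map_fin_three {A : Type*} [CommSemiring A] (a : Fin 3 → A) :
    (Finset.univ.val.map a).esymm 1 = a 0 + a 1 + a 2 ∧
    (Finset.univ.val.map a).esymm 2 = a 0 * a 1 + a 0 * a 2 + a 1 * a 2 ∧
    (Finset.univ.val.map a).esymm 3 = a 0 * a 1 * a 2 := by
  refine ⟨?_, ?_, ?_⟩ <;>
    simp [Multiset.esymm, Fin.univ_val_map, List.ofFn_succ, Multiset.powersetCard_coe,
      List.sublistsLen, List.sublistsLenAux] <;>
    ring

theorem _root_.Submodule.mem_span_of_eq_of_mem {S M : Type*} [Semiring S] [AddCommMonoid M]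
    [Module S M] {s : Set M} {x y : M} (h : x = y) (hy : y ∈ s) : x ∈ Submodule.span S s :=
  h ▸ Submodule.subset_span hy

theorem rename_mem_I (w : Equiv.Perm (Fin 3)) {f : P} (hf : f ∈ I) : rename w f ∈ I := by
  have : Ideal.map (rename w) I ≤ I := by
    rw [I, Ideal.map_span]
    refine Ideal.span_mono ?_
    rintro _ ⟨e, he, rfl⟩
    simp only [Set.mem_insert_iff, Set.mem_singleton_iff] at he
    rcases he with rfl | rfl | rfl <;> rw [rename_esymm] <;> simp
  exact this (Ideal.mem_map_of_mem _ hf)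

theorem mem_ker_π {f : P} : f ∈ LinearMap.ker π ↔ f ∈ I := Ideal.Quotient.eq_zero_iff_mem

theorem L_mem_compatibleMaps (w : Equiv.Perm (Fin 3)) :
    L w ∈ Submodule.compatibleMaps (LinearMap.ker π) (LinearMap.ker π) :=
  fun _ hf => mem_ker_π.2 (rename_mem_I w (mem_ker_π.1 hf))

def ξ (i : Fin 3) : R := π (X i)

theorem π_eq_aeval (f : P) : π f = aeval ξ f :=
  DFunLike.congr_fun (aeval_unique (Ideal.Quotient.mkₐ k I)) f

theorem π_L (w : Equiv.Perm (Fin 3)) (f : P) : π (L w f) = aeval (fun i => ξ (w i)) f := by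
  rw [π_eq_aeval, L, AlgHom.toLinearMap_apply, aeval_rename]
  rfl

theorem adjoin_range_ξ : Algebra.adjoin k (Set.range ξ) = ⊤ := by
  rw [show Set.range ξ = Ideal.Quotient.mkₐ k I '' Set.range X by rw [← Set.range_comp]; rfl,
    Algebra.adjoin_image, adjoin_range_X, Algebra.map_top, AlgHom.range_eq_top]
  exact Ideal.Quotient.mkₐ_surjective k I

theorem R.two_eq_zero : (2 : R) = 0 := by
  have h : algebraMap k R 2 = 2 := map_ofNat _ 2
  rw [← h, show (2 : k) = 0 from rfl, map_zero]

theorem multiset_esymm_ξ_eq_zero {j : ℕ} (hj : j = 1 ∨ j = 2 ∨ j = 3) :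
    (Finset.univ.val.map ξ).esymm j = 0 := by
  rw [← aeval_esymm_eq_multiset_esymm (Fin 3) k, ← π_eq_aeval, ← LinearMap.mem_ker, mem_ker_π]
  exact Ideal.subset_span (by rcases hj with rfl | rfl | rfl <;> simp)

theorem ξ_relations : ξ 0 + ξ 1 + ξ 2 = 0 ∧ ξ 0 * ξ 1 + ξ 0 * ξ 2 + ξ 1 * ξ 2 = 0 ∧
    ξ 0 * ξ 1 * ξ 2 = 0 := by
  obtain ⟨h1, h2, h3⟩ := Multiset.esymm_map_fin_three ξ
  exact ⟨h1 ▸ multiset_esymm_ξ_eq_zero (by simp), h2 ▸ multiset_esymm_ξ_eq_zero (by simp),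
    h3 ▸ multiset_esymm_ξ_eq_zero (by simp)⟩

theorem ξ_two : ξ 2 = ξ 0 + ξ 1 := by grind [ξ_relations, R.two_eq_zero]

theorem ξ_one_sq : ξ 1 ^ 2 = ξ 0 ^ 2 + ξ 0 * ξ 1 := by grind [ξ_relations, R.two_eq_zero]

theorem ξ_zero_pow_three : ξ 0 ^ 3 = 0 := by grind [ξ_relations, R.two_eq_zero]

def artinMonomials : Set P := {1, X 0, X 1, X 0 ^ 2, X 0 * X 1, X 0 ^ 2 * X 1}

theorem image_π_artinMonomials :
    π '' artinMonomials = {1, ξ 0, ξ 1, ξ 0 ^ 2, ξ 0 * ξ 1, ξ 0 ^ 2 * ξ 1} := by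
  simp [artinMonomials, Set.image_insert_eq, π_eq_aeval]

theorem span_image_π_artinMonomials : Submodule.span k (π '' artinMonomials) = ⊤ := by
  rw [image_π_artinMonomials]
  set N := Submodule.span k ({1, ξ 0, ξ 1, ξ 0 ^ 2, ξ 0 * ξ 1, ξ 0 ^ 2 * ξ 1} : Set R)
  have hmul₀ : N ≤ N.comap (LinearMap.mulRight k (ξ 0)) := by
    simp only [N, Submodule.span_le, Set.insert_subset_iff, Set.singleton_subset_iff,
      SetLike.mem_coe, Submodule.mem_comap, LinearMap.mulRight_apply]
    refine ⟨Submodule.mem_span_of_eq_of_mem (y := ξ 0) (by ring) (by simp),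
      Submodule.mem_span_of_eq_of_mem (y := ξ 0 ^ 2) (by ring) (by simp),
      Submodule.mem_span_of_eq_of_mem (y := ξ 0 * ξ 1) (by ring) (by simp),
      (by linear_combination ξ_zero_pow_three : ξ 0 ^ 2 * ξ 0 = 0) ▸ N.zero_mem,
      Submodule.mem_span_of_eq_of_mem (y := ξ 0 ^ 2 * ξ 1) (by ring) (by simp),
      (by linear_combination ξ 1 * ξ_zero_pow_three : ξ 0 ^ 2 * ξ 1 * ξ 0 = 0) ▸ N.zero_mem⟩
  have hmul₁ : N ≤ N.comap (LinearMap.mulRight k (ξ 1)) := by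
    simp only [N, Submodule.span_le, Set.insert_subset_iff, Set.singleton_subset_iff,
      SetLike.mem_coe, Submodule.mem_comap, LinearMap.mulRight_apply]
    refine ⟨Submodule.mem_span_of_eq_of_mem (y := ξ 1) (by ring) (by simp),
      Submodule.mem_span_of_eq_of_mem (y := ξ 0 * ξ 1) (by ring) (by simp),
      (by linear_combination ξ_one_sq : ξ 1 * ξ 1 = ξ 0 ^ 2 + ξ 0 * ξ 1) ▸
        add_mem (Submodule.subset_span (by simp)) (Submodule.subset_span (by simp)),
      Submodule.mem_span_of_eq_of_mem (y := ξ 0 ^ 2 * ξ 1) (by ring) (by simp),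
      Submodule.mem_span_of_eq_of_mem (y := ξ 0 ^ 2 * ξ 1)
        (by linear_combination ξ 0 * ξ_one_sq + ξ_zero_pow_three) (by simp),
      (by linear_combination ξ 0 ^ 2 * ξ_one_sq + (ξ 0 + ξ 1) * ξ_zero_pow_three :
        ξ 0 ^ 2 * ξ 1 * ξ 1 = 0) ▸ N.zero_mem⟩
  refine N.eq_top_of_one_mem_of_mul_mem adjoin_range_ξ (Submodule.subset_span (by simp)) ?_
  rintro _ ⟨i, rfl⟩ n hn
  fin_cases i
  · exact hmul₀ hn
  · exact hmul₁ hn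
  · show n * ξ 2 ∈ N
    rw [ξ_two, mul_add]
    exact add_mem (hmul₀ hn) (hmul₁ hn)

theorem range_π_comp_eq_span {T : P →ₗ[k] P}
    (hT : T ∈ Submodule.compatibleMaps (LinearMap.ker π) (LinearMap.ker π)) :
    LinearMap.range (π ∘ₗ T) = Submodule.span k ((π ∘ₗ T) '' artinMonomials) :=
  LinearMap.range_comp_eq_span_image hT span_image_π_artinMonomials

theorem range_π_comp_T₁ :
    LinearMap.range (π ∘ₗ T₁) = Submodule.span k {π 1, π (x₁ ^ 2 * x₂)} := by
  rw [range_π_comp_eq_span (by unfold T₁; apply_rules [add_mem, L_mem_compatibleMaps])]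
  simp only [artinMonomials, Set.image_insert_eq, Set.image_singleton, LinearMap.comp_apply, T₁,
    LinearMap.add_apply, map_add, π_L]
  simp only [π_eq_aeval, map_mul, map_pow, aeval_X, map_one, Equiv.Perm.coe_mul, Equiv.Perm.coe_one,
    Function.comp_apply, id, t₁, t₂, Equiv.swap_apply_left, Equiv.swap_apply_right,
    Equiv.swap_apply_of_ne_of_ne, ne_eq, Fin.reduceEq, not_false_eq_true, x₁, x₂]
  rw [show (1 : R) + 1 + 1 = 1 by linear_combination R.two_eq_zero,
    show ξ 1 + ξ 2 + ξ 0 = 0 by grind [ξ_relations],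
    show ξ 0 ^ 2 + ξ 1 ^ 2 + ξ 2 ^ 2 = 0 by grind [ξ_relations, R.two_eq_zero],
    show ξ 0 * ξ 1 + ξ 1 * ξ 2 + ξ 2 * ξ 0 = 0 by grind [ξ_relations],
    show ξ 0 ^ 2 * ξ 1 + ξ 1 ^ 2 * ξ 2 + ξ 2 ^ 2 * ξ 0 = ξ 0 ^ 2 * ξ 1 by
      grind [ξ_relations, R.two_eq_zero],
    ξ_relations.1]
  simp [Set.insert_comm _ (0 : R), Submodule.span_insert_zero]

theorem range_π_comp_T₂ :
    LinearMap.range (π ∘ₗ T₂) = Submodule.span k {π x₂, π (x₁ ^ 2 + x₁ * x₂)} := by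
  rw [range_π_comp_eq_span (by unfold T₂; apply_rules [add_mem, L_mem_compatibleMaps])]
  simp only [artinMonomials, Set.image_insert_eq, Set.image_singleton, LinearMap.comp_apply, T₂,
    LinearMap.add_apply, map_add, π_L]
  simp only [π_eq_aeval, map_mul, map_pow, aeval_X, map_one, Equiv.Perm.coe_mul, Equiv.Perm.coe_one,
    Function.comp_apply, id, t₁, t₂, Equiv.swap_apply_left, Equiv.swap_apply_right,
    Equiv.swap_apply_of_ne_of_ne, ne_eq, Fin.reduceEq, not_false_eq_true, x₁, x₂]
  rw [show (1 : R) + 1 + 1 + 1 = 0 by linear_combination 2 * R.two_eq_zero,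
    show ξ 0 + ξ 0 + ξ 2 + ξ 2 = 0 by linear_combination (ξ 0 + ξ 2) * R.two_eq_zero,
    show ξ 1 + ξ 2 + ξ 0 + ξ 1 = ξ 1 by grind [ξ_relations],
    show ξ 0 ^ 2 + ξ 0 ^ 2 + ξ 2 ^ 2 + ξ 2 ^ 2 = 0 by
      linear_combination (ξ 0 ^ 2 + ξ 2 ^ 2) * R.two_eq_zero,
    show ξ 0 * ξ 1 + ξ 0 * ξ 2 + ξ 2 * ξ 0 + ξ 2 * ξ 1 = ξ 0 ^ 2 + ξ 0 * ξ 1 by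
      grind [ξ_relations, R.two_eq_zero],
    show ξ 0 ^ 2 * ξ 1 + ξ 0 ^ 2 * ξ 2 + ξ 2 ^ 2 * ξ 0 + ξ 2 ^ 2 * ξ 1 = 0 by
      grind [ξ_relations, R.two_eq_zero]]
  simp [Set.pair_comm _ (0 : R), Set.insert_comm _ (0 : R), Submodule.span_insert_zero]

theorem range_π_comp_T₃ :
    LinearMap.range (π ∘ₗ T₃) = Submodule.span k {π x₁, π (x₁ ^ 2)} := by
  rw [range_π_comp_eq_span (by unfold T₃; apply_rules [add_mem, L_mem_compatibleMaps])]
  simp only [artinMonomials, Set.image_insert_eq, Set.image_singleton, LinearMap.comp_apply, T₃,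
    LinearMap.add_apply, map_add, π_L]
  simp only [π_eq_aeval, map_mul, map_pow, aeval_X, map_one, Equiv.Perm.coe_mul, Equiv.Perm.coe_one,
    Function.comp_apply, id, t₁, t₂, Equiv.swap_apply_left, Equiv.swap_apply_right,
    Equiv.swap_apply_of_ne_of_ne, ne_eq, Fin.reduceEq, not_false_eq_true, x₁]
  rw [show (1 : R) + 1 + 1 + 1 = 0 by linear_combination 2 * R.two_eq_zero,
    show ξ 0 + ξ 0 + ξ 1 + ξ 2 = ξ 0 by grind [ξ_relations],
    show ξ 1 + ξ 2 + ξ 2 + ξ 1 = 0 by linear_combination (ξ 1 + ξ 2) * R.two_eq_zero,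
    show ξ 0 ^ 2 + ξ 0 ^ 2 + ξ 1 ^ 2 + ξ 2 ^ 2 = ξ 0 ^ 2 by grind [ξ_relations, R.two_eq_zero],
    show ξ 0 * ξ 1 + ξ 0 * ξ 2 + ξ 1 * ξ 2 + ξ 2 * ξ 1 = ξ 0 ^ 2 by
      grind [ξ_relations, R.two_eq_zero],
    show ξ 0 ^ 2 * ξ 1 + ξ 0 ^ 2 * ξ 2 + ξ 1 ^ 2 * ξ 2 + ξ 2 ^ 2 * ξ 1 = 0 by
      grind [ξ_relations, R.two_eq_zero]]
  simp [Set.pair_comm _ (0 : R), Set.insert_comm _ (0 : R), Submodule.span_insert_zero]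

/-- The ranges of the endomorphisms of `R` induced by `T₁`, `T₂`, `T₃`
(since the quotient map `π` is surjective and each `Tᵢ` descends to `R`, the range
of the induced endomorphism of `R` is exactly the range of `π ∘ Tᵢ : P → R`). -/
theorem range_induced_idempotents :
    LinearMap.range (π ∘ₗ T₁) = Submodule.span k {π 1, π (x₁ ^ 2 * x₂)} ∧
    LinearMap.range (π ∘ₗ T₂) = Submodule.span k {π x₂, π (x₁ ^ 2 + x₁ * x₂)} ∧
    LinearMap.range (π ∘ₗ T₃) = Submodule.span k {π x₁, π (x₁ ^ 2)} :=
  ⟨range_π_comp_T₁, range_π_comp_T₂, range_π_comp_T₃⟩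

end

end Stmt2
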